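/- arXiv:2312.07243 — 2 statements merged into one kernel-verified Lean document; each statement's English description precedes it below -/
import Mathlib

section
/- Let D be a positive integer, n ≥ 0 an integer, h > 0, λ_s ∈ ℝ, and let x̂ : ℝ → ℝ^D be (n+1)-times continuously differentiable on [λ_s, λ_s + h] with ‖x̂^{(n+1)}(u)‖ ≤ M for all u ∈ [λ_s, λ_s + h]. Then ‖ ∫_0^h e^{u−h} x̂(λ_s + u) du − Σ_{k=0}^{n} x̂^{(k)}(λ_s) · J_k(h) ‖ ≤ M · h^{n+2}/(n+2)!, where J_k(h) := ∫_0^h e^{u−h} u^k/k! du = Σ_{j=1}^{k} (−1)^{k−j} h^j/j! + (−1)^k(1 − e^{−h}). That is, the n-th order Taylor expansion of the data-prediction exponential integral has truncation error of order h^{n+2}. -/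
/-!
Let `P` be the degree-`n` Taylor polynomial of `x̂` at `l`. Its terms integrate exactly against the
weight `e^(u-h)`, giving `∑ J_k(h) x̂^(k)(l)`, so the error is `∫₀ʰ e^(u-h) (x̂(l+u) - P(l+u)) du`.
Since `e^(u-h) ≤ 1` and the Taylor remainder is at most `M u^(n+1)/(n+1)!`, integration yields
`M h^(n+2)/(n+2)!`. The closed form of `J_k` follows from `J_(k+1) = h^(k+1)/(k+1)! - J_k`, obtained
by differentiating `e^(u-h) u^(k+1)/(k+1)!`.
-/

open Set Real Nat intervalIntegral

theorem hasDerivAt_pow_succ_div_factorial (k : ℕ) (u : ℝ) :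
    HasDerivAt (fun u : ℝ => u ^ (k + 1) / (k + 1)!) (u ^ k / k !) u := by
  refine ((hasDerivAt_pow (k + 1) u).div_const _).congr_deriv ?_
  push_cast [Nat.factorial_succ, Nat.add_sub_cancel]
  field_simp

theorem integral_pow_div_factorial (k : ℕ) (h : ℝ) :
    ∫ u in (0:ℝ)..h, u ^ k / k ! = h ^ (k + 1) / (k + 1)! := by
  rw [integral_eq_sub_of_hasDerivAt (fun u _ => hasDerivAt_pow_succ_div_factorial k u)
    (Continuous.intervalIntegrable (by fun_prop) _ _)]
  simp

theorem norm_sub_taylorWithinEval_le {E : Type*} [NormedAddCommGroup E] [NormedSpace ℝ E]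
    {f : ℝ → E} {a b C x : ℝ} {n : ℕ} (hab : a ≤ b)
    (hf : ContDiffOn ℝ (n + 1 : ℕ) f (Icc a b)) (hx : x ∈ Icc a b)
    (hC : ∀ y ∈ Icc a b, ‖iteratedDerivWithin (n + 1) f (Icc a b) y‖ ≤ C) :
    ‖f x - taylorWithinEval f n (Icc a b) a x‖ ≤ C * ((x - a) ^ (n + 1) / (n + 1)!) := by
  rcases hab.eq_or_lt with rfl | hab
  · obtain rfl : x = a := by simpa using hx
    simp
  have hf' : DifferentiableOn ℝ (iteratedDerivWithin n f (Icc a b)) (Icc a b) :=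
    hf.differentiableOn_iteratedDerivWithin (mod_cast n.lt_succ_self) (uniqueDiffOn_Icc hab)
  have hderiv : ∀ t ∈ Icc a x, HasDerivWithinAt (fun y => taylorWithinEval f n (Icc a b) y x)
      (((n ! : ℝ)⁻¹ * (x - t) ^ n) • iteratedDerivWithin (n + 1) f (Icc a b) t) (Icc a x) t :=
    fun t ht => (hasDerivWithinAt_taylorWithinEval_at_Icc x hab (Icc_subset_Icc_right hx.2 ht)
      hf.of_succ hf').mono (Icc_subset_Icc_right hx.2)
  -- The derivative `C (x - t)^n / n!` of the barrier below dominates that of `t ↦ P_t(x)`; this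
  -- gives `(n+1)!` where Mathlib's `taylor_mean_remainder_bound` only has `n!`.
  have hB : ∀ t, HasDerivAt
      (fun t => C * ((x - a) ^ (n + 1) / (n + 1)! - (x - t) ^ (n + 1) / (n + 1)!))
      (C * ((x - t) ^ n / n !)) t := fun t => by
    refine ((((hasDerivAt_pow_succ_div_factorial n (x - t)).comp t
      ((hasDerivAt_id t).const_sub x)).const_sub _).const_mul C).congr_deriv ?_
    simp
  have hbound : ∀ t ∈ Ico a x,
      ‖((n ! : ℝ)⁻¹ * (x - t) ^ n) • iteratedDerivWithin (n + 1) f (Icc a b) t‖ ≤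
        C * ((x - t) ^ n / n !) := by
    rintro t ⟨hat, htx⟩
    have hxt : 0 ≤ x - t := sub_nonneg.2 htx.le
    rw [norm_smul, norm_of_nonneg (by positivity), mul_comm C, inv_mul_eq_div]
    exact mul_le_mul_of_nonneg_left (hC t ⟨hat, htx.le.trans hx.2⟩) (by positivity)
  have := image_norm_le_of_norm_deriv_right_le_deriv_boundary
    (fun t ht => ((hderiv t ht).sub_const (taylorWithinEval f n (Icc a b) a x)).continuousWithinAt)
    (fun t ht => ((hderiv t (Ico_subset_Icc_self ht)).sub_const _).mono_of_mem_nhdsWithin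
      (Icc_mem_nhdsGE_of_mem ht)) (by simp) hB hbound (right_mem_Icc.2 hx.1)
  simpa [taylorWithinEval_self] using this

/-- The coefficient `J_k(h)` of the paper. -/
noncomputable def expTaylorCoeff (k : ℕ) (h : ℝ) : ℝ :=
  ∫ u in (0:ℝ)..h, exp (u - h) * u ^ k / k !

theorem expTaylorCoeff_zero (h : ℝ) : expTaylorCoeff 0 h = 1 - exp (-h) := by
  have hderiv : ∀ u ∈ uIcc 0 h, HasDerivAt (fun u => exp (u - h)) (exp (u - h)) u :=
    fun u _ => by simpa using ((hasDerivAt_id u).sub_const h).exp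
  simp only [expTaylorCoeff, pow_zero, mul_one, factorial_zero, cast_one, div_one]
  rw [integral_eq_sub_of_hasDerivAt hderiv (Continuous.intervalIntegrable (by fun_prop) _ _)]
  simp

theorem expTaylorCoeff_succ (k : ℕ) (h : ℝ) :
    expTaylorCoeff (k + 1) h = h ^ (k + 1) / (k + 1)! - expTaylorCoeff k h := by
  have hderiv : ∀ u ∈ uIcc 0 h, HasDerivAt (fun u => exp (u - h) * (u ^ (k + 1) / (k + 1)!))
      (exp (u - h) * u ^ (k + 1) / (k + 1)! + exp (u - h) * u ^ k / k !) u := fun u _ => by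
    refine ((((hasDerivAt_id u).sub_const h).exp).mul
      (hasDerivAt_pow_succ_div_factorial k u)).congr_deriv ?_
    simp only [id_eq]
    ring
  have hint : ∀ m : ℕ, IntervalIntegrable (fun u => exp (u - h) * u ^ m / m !)
      MeasureTheory.volume 0 h := fun m => Continuous.intervalIntegrable (by fun_prop) _ _
  have := integral_eq_sub_of_hasDerivAt hderiv ((hint (k + 1)).add (hint k))
  rw [integral_add (hint (k + 1)) (hint k)] at this
  rw [expTaylorCoeff, expTaylorCoeff, eq_sub_iff_add_eq, this]
  simp

theorem expTaylorCoeff_eq (k : ℕ) (h : ℝ) :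
    expTaylorCoeff k h =
      ∑ j ∈ Finset.Icc 1 k, (-1) ^ (k - j) * h ^ j / j ! + (-1) ^ k * (1 - exp (-h)) := by
  induction k with
  | zero => simpa using expTaylorCoeff_zero h
  | succ k ih =>
    have hsign : ∀ j ∈ Finset.Icc 1 k,
        (-1 : ℝ) ^ (k + 1 - j) * h ^ j / j ! = -((-1) ^ (k - j) * h ^ j / j !) := by
      intro j hj
      rw [Nat.sub_add_comm (Finset.mem_Icc.mp hj).2, pow_succ]
      ring
    rw [expTaylorCoeff_succ, ih, Finset.sum_Icc_succ_top (Nat.le_add_left 1 k),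
      Finset.sum_congr rfl hsign, Finset.sum_neg_distrib, Nat.sub_self, pow_succ]
    ring

section WeightedTaylor

variable {E : Type*} [NormedAddCommGroup E] [NormedSpace ℝ E] [CompleteSpace E]

theorem integral_exp_smul_taylorWithinEval (f : ℝ → E) (n : ℕ) (s : Set ℝ) (l h : ℝ) :
    ∫ u in (0:ℝ)..h, exp (u - h) • taylorWithinEval f n s l (l + u) =
      ∑ k ∈ Finset.range (n + 1), expTaylorCoeff k h • iteratedDerivWithin k f s l := by
  simp_rw [taylor_within_apply, add_sub_cancel_left, Finset.smul_sum, smul_smul]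
  rw [integral_finsetSum fun k _ => Continuous.intervalIntegrable (by fun_prop) _ _]
  refine Finset.sum_congr rfl fun k _ => ?_
  rw [intervalIntegral.integral_smul_const, expTaylorCoeff]
  congr 1
  exact integral_congr fun u _ => by ring

theorem norm_integral_exp_smul_sub_sum_le {f : ℝ → E} {n : ℕ} {l h M : ℝ} (hh : 0 ≤ h)
    (hf : ContDiffOn ℝ (n + 1 : ℕ) f (Icc l (l + h)))
    (hM : ∀ u ∈ Icc l (l + h), ‖iteratedDerivWithin (n + 1) f (Icc l (l + h)) u‖ ≤ M) :
    ‖(∫ u in (0:ℝ)..h, exp (u - h) • f (l + u)) -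
        ∑ k ∈ Finset.range (n + 1), expTaylorCoeff k h • iteratedDerivWithin k f (Icc l (l + h)) l‖
      ≤ M * h ^ (n + 2) / (n + 2)! := by
  set s := Icc l (l + h)
  have hmaps : MapsTo (l + ·) (uIcc 0 h) s := fun u hu => by
    rw [uIcc_of_le hh] at hu
    exact ⟨by linarith [hu.1], by linarith [hu.2]⟩
  have hint_f : IntervalIntegrable (fun u => exp (u - h) • f (l + u)) MeasureTheory.volume 0 h :=
    ((continuous_exp.comp (continuous_sub_right h)).continuousOn.smul
      (hf.continuousOn.comp (continuous_const_add l).continuousOn hmaps)).intervalIntegrable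
  have hint_P : IntervalIntegrable (fun u => exp (u - h) • taylorWithinEval f n s l (l + u))
      MeasureTheory.volume 0 h := by
    simp_rw [taylor_within_apply]
    exact Continuous.intervalIntegrable (by fun_prop) _ _
  have hrem : ∀ u ∈ Ioc 0 h, ‖exp (u - h) • f (l + u) -
      exp (u - h) • taylorWithinEval f n s l (l + u)‖ ≤ M * (u ^ (n + 1) / (n + 1)!) := by
    rintro u ⟨hu0, huh⟩
    have htaylor := norm_sub_taylorWithinEval_le (by linarith) hf
      (x := l + u) ⟨by linarith, by linarith⟩ hM
    rw [add_sub_cancel_left] at htaylor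
    rw [← smul_sub, norm_smul, norm_of_nonneg (exp_pos _).le]
    exact (mul_le_of_le_one_left (norm_nonneg _) (exp_le_one_iff.2 (by linarith))).trans htaylor
  rw [← integral_exp_smul_taylorWithinEval, ← integral_sub hint_f hint_P]
  calc _ ≤ ∫ u in (0:ℝ)..h, M * (u ^ (n + 1) / (n + 1)!) :=
        norm_integral_le_of_norm_le hh (Filter.Eventually.of_forall hrem)
          (Continuous.intervalIntegrable (by fun_prop) _ _)
    _ = M * h ^ (n + 2) / (n + 2)! := by
        rw [integral_const_mul, integral_pow_div_factorial, mul_div_assoc]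

end WeightedTaylor

theorem stmt_5_general (D n : ℕ) (h M : ℝ) (hh : 0 < h) (l : ℝ)
    (xhat : ℝ → EuclideanSpace ℝ (Fin D))
    (hx : ContDiffOn ℝ (n + 1 : ℕ) xhat (Set.Icc l (l + h)))
    (hM : ∀ u ∈ Set.Icc l (l + h),
      ‖iteratedDerivWithin (n + 1) xhat (Set.Icc l (l + h)) u‖ ≤ M)
    (J : ℕ → ℝ → ℝ)
    (hJ : ∀ (k : ℕ) (h' : ℝ),
      J k h' = ∫ u in (0:ℝ)..h', Real.exp (u - h') * u ^ k / (k.factorial : ℝ)) :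
    (∀ k : ℕ,
      J k h = (∑ j ∈ Finset.Icc 1 k, (-1 : ℝ) ^ (k - j) * h ^ j / (j.factorial : ℝ)) +
        (-1 : ℝ) ^ k * (1 - Real.exp (-h))) ∧
    ‖(∫ u in (0:ℝ)..h, Real.exp (u - h) • xhat (l + u)) -
        ∑ k ∈ Finset.range (n + 1),
          J k h • iteratedDerivWithin k xhat (Set.Icc l (l + h)) l‖ ≤
      M * h ^ (n + 2) / ((n + 2).factorial : ℝ) := by
  obtain rfl : J = expTaylorCoeff := funext₂ hJ
  exact ⟨fun k => expTaylorCoeff_eq k h, norm_integral_exp_smul_sub_sum_le hh.le hx hM⟩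

/-- The `n`-th order Taylor expansion of the data-prediction exponential
integral has truncation error of order `h^(n+2)`. -/
theorem stmt_5 (D n : ℕ) (hD : 0 < D) (h M : ℝ) (hh : 0 < h) (l : ℝ)
    (xhat : ℝ → EuclideanSpace ℝ (Fin D))
    (hx : ContDiffOn ℝ (n + 1 : ℕ) xhat (Set.Icc l (l + h)))
    (hM : ∀ u ∈ Set.Icc l (l + h),
      ‖iteratedDerivWithin (n + 1) xhat (Set.Icc l (l + h)) u‖ ≤ M)
    (J : ℕ → ℝ → ℝ)
    (hJ : ∀ (k : ℕ) (h' : ℝ),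
      J k h' = ∫ u in (0:ℝ)..h', Real.exp (u - h') * u ^ k / (k.factorial : ℝ)) :
    (∀ k : ℕ,
      J k h = (∑ j ∈ Finset.Icc 1 k, (-1 : ℝ) ^ (k - j) * h ^ j / (j.factorial : ℝ)) +
        (-1 : ℝ) ^ k * (1 - Real.exp (-h))) ∧
    ‖(∫ u in (0:ℝ)..h, Real.exp (u - h) • xhat (l + u)) -
        ∑ k ∈ Finset.range (n + 1),
          J k h • iteratedDerivWithin k xhat (Set.Icc l (l + h)) l‖ ≤
      M * h ^ (n + 2) / ((n + 2).factorial : ℝ) :=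
  stmt_5_general D n h M hh l xhat hx hM J hJ
end

section
/- Let p ≥ 0 be an integer, let P : ℝ → ℝ be a polynomial of degree at most p, let λ_s < λ_t be reals with h := λ_t − λ_s, and let α_t, σ_t > 0 satisfy σ_t = α_t e^{−λ_t}. Then α_t · ∫_{λ_s}^{λ_t} e^{−λ} P(λ) dλ = σ_t · Σ_{k=0}^{p} P^{(k)}(λ_s) · (e^h − Σ_{j=0}^{k} h^j/j!). That is, for a polynomial integrand the exponentially weighted integral equals its (exactly truncating) Taylor expansion in the unified framework, so the DEIS update with Lagrange interpolation in the log-SNR domain coincides with the Taylor-expansion update. -/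
/-!
Expanding `P` in its (finite, hence exact) Taylor series at `λ_s` reduces the claim to the
monomials `(λ - λ_s)^k / k!`. For these, `-e^{-λ} Σ_{j ≤ k} (λ - λ_s)^j / j!` is an
antiderivative of `e^{-λ} (λ - λ_s)^k / k!`, because differentiating the truncated exponential
series drops its last term; evaluating it between `λ_s` and `λ_t` gives
`e^{-λ_t} (e^h - Σ_{j ≤ k} h^j / j!)`, and `α_t e^{-λ_t} = σ_t`.
-/

open Finset Polynomial

theorem Polynomial.eval_eq_sum_range_iterate_derivative {R : Type*} [Field R] [CharZero R]
    {P : R[X]} {p : ℕ} (hdeg : P.natDegree ≤ p) (a x : R) :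
    P.eval x = ∑ k ∈ range (p + 1), (derivative^[k] P).eval a * ((x - a) ^ k / k.factorial) := by
  have htaylor : (taylor a P).natDegree < p + 1 := by
    rw [natDegree_taylor]; omega
  rw [← taylor_eval_sub a, eval_eq_sum_range' htaylor]
  refine sum_congr rfl fun k _ => ?_
  rw [taylor_coeff, ← factorial_smul_hasseDeriv, LinearMap.smul_apply, eval_smul, nsmul_eq_mul]
  have hk : (k.factorial : R) ≠ 0 := Nat.cast_ne_zero.mpr k.factorial_ne_zero
  field_simp

theorem Real.hasDerivAt_sum_range_pow_div_factorial (k : ℕ) (x : ℝ) :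
    HasDerivAt (fun x : ℝ => ∑ j ∈ range (k + 1), x ^ j / j.factorial)
      (∑ j ∈ range k, x ^ j / j.factorial) x := by
  induction k with
  | zero => simpa using hasDerivAt_const x (1 : ℝ)
  | succ k ih =>
    simp_rw [sum_range_succ _ (k + 1)]
    refine (ih.fun_add ((hasDerivAt_pow (k + 1) x).div_const ((k + 1).factorial : ℝ))).congr_deriv
      ?_
    rw [sum_range_succ]
    push_cast [Nat.factorial_succ]
    field_simp

theorem integral_exp_neg_mul_pow_div_factorial (a b : ℝ) (k : ℕ) :
    ∫ l in a..b, Real.exp (-l) * ((l - a) ^ k / k.factorial) =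
      Real.exp (-b) * (Real.exp (b - a) - ∑ j ∈ range (k + 1), (b - a) ^ j / j.factorial) := by
  set F : ℝ → ℝ := fun l => -Real.exp (-l) * ∑ j ∈ range (k + 1), (l - a) ^ j / j.factorial
  have hF : ∀ l, HasDerivAt F (Real.exp (-l) * ((l - a) ^ k / k.factorial)) l := by
    intro l
    have hexp : HasDerivAt (fun l => -Real.exp (-l)) (Real.exp (-l)) l := by
      simpa [Pi.neg_def] using ((hasDerivAt_neg l).exp).neg
    have hsum := (Real.hasDerivAt_sum_range_pow_div_factorial k (l - a)).comp l
      ((hasDerivAt_id l).sub_const a)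
    refine (hexp.fun_mul hsum).congr_deriv ?_
    simp only [Function.comp_apply, id, sum_range_succ]
    ring
  rw [intervalIntegral.integral_eq_sub_of_hasDerivAt (fun l _ => hF l)
    (by apply Continuous.intervalIntegrable; fun_prop)]
  have hexp : Real.exp (-a) = Real.exp (-b) * Real.exp (b - a) := by
    rw [← Real.exp_add]; ring_nf
  have hsum_zero : ∑ j ∈ range (k + 1), (0 : ℝ) ^ j / j.factorial = 1 := by
    simp [sum_range_succ']
  simp only [F, sub_self, hsum_zero, hexp]
  ring

theorem stmt_16_general (p : ℕ) (P : Polynomial ℝ) (hdeg : P.natDegree ≤ p)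
    (ls lt : ℝ) (h : ℝ) (hh : h = lt - ls)
    (αt σt : ℝ)
    (hrel : σt = αt * Real.exp (-lt)) :
    (αt * ∫ l in ls..lt, Real.exp (-l) * P.eval l) =
      σt * ∑ k ∈ Finset.range (p + 1),
        ((fun Q => Polynomial.derivative Q)^[k] P).eval ls *
          (Real.exp h - ∑ j ∈ Finset.range (k + 1), h ^ j / (j.factorial : ℝ)) := by
  have hintegral : ∫ l in ls..lt, Real.exp (-l) * P.eval l =
      ∑ k ∈ range (p + 1), (derivative^[k] P).eval ls *
        ∫ l in ls..lt, Real.exp (-l) * ((l - ls) ^ k / k.factorial) := by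
    simp_rw [P.eval_eq_sum_range_iterate_derivative hdeg ls, mul_sum,
      ← intervalIntegral.integral_const_mul]
    rw [intervalIntegral.integral_finsetSum fun k _ => by
      apply Continuous.intervalIntegrable; fun_prop]
    refine sum_congr rfl fun k _ => intervalIntegral.integral_congr fun l _ => ?_
    ring
  simp_rw [hintegral, integral_exp_neg_mul_pow_div_factorial, hrel, hh, mul_sum]
  refine sum_congr rfl fun k _ => ?_
  ring

/-- For a polynomial integrand the exponentially weighted integral equals its
exactly truncating Taylor expansion: DEIS with Lagrange interpolation in the
log-SNR domain coincides with the Taylor-expansion update. -/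
theorem stmt_16 (p : ℕ) (P : Polynomial ℝ) (hdeg : P.natDegree ≤ p)
    (ls lt : ℝ) (hord : ls < lt) (h : ℝ) (hh : h = lt - ls)
    (αt σt : ℝ) (hαt : 0 < αt) (hσt : 0 < σt)
    (hrel : σt = αt * Real.exp (-lt)) :
    (αt * ∫ l in ls..lt, Real.exp (-l) * P.eval l) =
      σt * ∑ k ∈ Finset.range (p + 1),
        ((fun Q => Polynomial.derivative Q)^[k] P).eval ls *
          (Real.exp h - ∑ j ∈ Finset.range (k + 1), h ^ j / (j.factorial : ℝ)) :=
  stmt_16_general p P hdeg ls lt h hh αt σt hrel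
end
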